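/- arXiv:2605.04381 — 9 statements merged into one kernel-verified Lean document; each statement's English description precedes it below -/
import Mathlib

section
/- Let k₁, k₂, c be real numbers with (k₁ + k₂ + 6c)² > 8(k₁² + k₂²), and define g(θ) = (k₁·cos⁴θ + k₂·sin⁴θ + 6c·cos²θ·sin²θ)² + (k₁·sin⁴θ + k₂·cos⁴θ + 6c·cos²θ·sin²θ)². Then for every real θ, g(θ) ≤ (k₁ + k₂ + 6c)²/8, and equality holds if and only if cos(2θ) = 0. -/
open Real

/-- The population JADE fourth-cumulant contrast across rotations. -/
noncomputable def jadeContrast (k₁ k₂ c θ : ℝ) : ℝ :=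
  (k₁ * cos θ ^ 4 + k₂ * sin θ ^ 4 + 6 * c * cos θ ^ 2 * sin θ ^ 2) ^ 2 +
  (k₁ * sin θ ^ 4 + k₂ * cos θ ^ 4 + 6 * c * cos θ ^ 2 * sin θ ^ 2) ^ 2

/-- Failure regime of the JADE criterion: if `(k₁+k₂+6c)² > 8(k₁²+k₂²)`, the contrast is
bounded by `(k₁+k₂+6c)²/8`, with equality exactly when `cos(2θ) = 0`. -/
theorem stmt_4 (k₁ k₂ c : ℝ)
    (hregime : (k₁ + k₂ + 6 * c) ^ 2 > 8 * (k₁ ^ 2 + k₂ ^ 2)) :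
    ∀ θ : ℝ, jadeContrast k₁ k₂ c θ ≤ (k₁ + k₂ + 6 * c) ^ 2 / 8 ∧
      (jadeContrast k₁ k₂ c θ = (k₁ + k₂ + 6 * c) ^ 2 / 8 ↔ cos (2 * θ) = 0) := by
  intro θ
  have h1 : sin θ ^ 2 = 1 - cos θ ^ 2 := by nlinarith [sin_sq_add_cos_sq θ]
  have hu : cos (2 * θ) = 2 * cos θ ^ 2 - 1 := cos_two_mul θ
  have key : jadeContrast k₁ k₂ c θ - (k₁ + k₂ + 6 * c) ^ 2 / 8
      = cos (2 * θ) ^ 2 / 8 *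
        (2 * (k₁ + k₂ + 6 * c) * (k₁ + k₂ - 6 * c)
          + (k₁ + k₂ - 6 * c) ^ 2 * cos (2 * θ) ^ 2 + 4 * (k₁ - k₂) ^ 2) := by
    unfold jadeContrast
    rw [hu, show sin θ ^ 4 = (sin θ ^ 2) ^ 2 by ring, h1]
    ring
  set u := cos (2 * θ) with hu_def
  have hu2 : u ^ 2 ≤ 1 := by
    nlinarith [neg_one_le_cos (2 * θ), cos_le_one (2 * θ)]
  have hterm : 2 * (k₁ + k₂ + 6 * c) * (k₁ + k₂ - 6 * c)
      + (k₁ + k₂ - 6 * c) ^ 2 * u ^ 2 + 4 * (k₁ - k₂) ^ 2 < 0 := by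
    nlinarith [mul_nonneg (by linarith : (0:ℝ) ≤ 1 - u ^ 2) (sq_nonneg (k₁ + k₂ - 6 * c))]
  have hprod : u ^ 2 / 8 *
      (2 * (k₁ + k₂ + 6 * c) * (k₁ + k₂ - 6 * c)
        + (k₁ + k₂ - 6 * c) ^ 2 * u ^ 2 + 4 * (k₁ - k₂) ^ 2) ≤ 0 :=
    mul_nonpos_of_nonneg_of_nonpos (by positivity) (le_of_lt hterm)
  refine ⟨by linarith, ?_, ?_⟩
  · intro heq
    have h0 : u ^ 2 / 8 *
        (2 * (k₁ + k₂ + 6 * c) * (k₁ + k₂ - 6 * c)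
          + (k₁ + k₂ - 6 * c) ^ 2 * u ^ 2 + 4 * (k₁ - k₂) ^ 2) = 0 := by linarith
    have := mul_eq_zero.mp h0
    rcases this with h | h
    · have : u ^ 2 = 0 := by linarith
      exact pow_eq_zero_iff (by norm_num) |>.mp this
    · linarith
  · intro h0
    have : u ^ 2 = 0 := by rw [h0]; ring
    rw [this] at key
    linarith [key]
end

section
/- Let k₁, k₂, c be real numbers with (k₁ + k₂ + 6c)² < 8(k₁² + k₂²), and define g(θ) = (k₁·cos⁴θ + k₂·sin⁴θ + 6c·cos²θ·sin²θ)² + (k₁·sin⁴θ + k₂·cos⁴θ + 6c·cos²θ·sin²θ)². Then for every real θ, g(θ) ≤ k₁² + k₂², and equality holds if and only if sin(2θ) = 0. -/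
open Real

lemma jade_key (k₁ k₂ c θ : ℝ) :
    jadeContrast k₁ k₂ c θ =
      k₁ ^ 2 + k₂ ^ 2 + (sin (2 * θ) ^ 2 / 2) *
        ((k₁ + k₂) * (6 * c - k₁ - k₂) +
          (6 * c - k₁ - k₂) ^ 2 * sin (2 * θ) ^ 2 / 4 - (k₁ - k₂) ^ 2) := by
  have h : sin θ ^ 2 + cos θ ^ 2 = 1 := sin_sq_add_cos_sq θ
  rw [jadeContrast, sin_two_mul]
  linear_combination (12 * k₂ * c * sin θ ^ 2 * cos θ ^ 2 + 12 * k₂ * c * sin θ ^ 2 * cos θ ^ 4 +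
    12 * k₂ * c * sin θ ^ 4 * cos θ ^ 2 + k₂ ^ 2 + k₂ ^ 2 * cos θ ^ 2 + k₂ ^ 2 * cos θ ^ 4 +
    k₂ ^ 2 * cos θ ^ 6 + k₂ ^ 2 * sin θ ^ 2 - 2 * k₂ ^ 2 * sin θ ^ 2 * cos θ ^ 2 -
    k₂ ^ 2 * sin θ ^ 2 * cos θ ^ 4 + k₂ ^ 2 * sin θ ^ 4 - k₂ ^ 2 * sin θ ^ 4 * cos θ ^ 2 +
    k₂ ^ 2 * sin θ ^ 6 + 12 * k₁ * c * sin θ ^ 2 * cos θ ^ 2 + 12 * k₁ * c * sin θ ^ 2 * cos θ ^ 4 +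
    12 * k₁ * c * sin θ ^ 4 * cos θ ^ 2 + k₁ ^ 2 + k₁ ^ 2 * cos θ ^ 2 + k₁ ^ 2 * cos θ ^ 4 +
    k₁ ^ 2 * cos θ ^ 6 + k₁ ^ 2 * sin θ ^ 2 - 2 * k₁ ^ 2 * sin θ ^ 2 * cos θ ^ 2 -
    k₁ ^ 2 * sin θ ^ 2 * cos θ ^ 4 + k₁ ^ 2 * sin θ ^ 4 - k₁ ^ 2 * sin θ ^ 4 * cos θ ^ 2 +
    k₁ ^ 2 * sin θ ^ 6) * h

/-- Success regime of the JADE criterion: if `(k₁+k₂+6c)² < 8(k₁²+k₂²)`, the contrast is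
bounded by `k₁² + k₂²`, with equality exactly when `sin(2θ) = 0`. -/
theorem stmt_5 (k₁ k₂ c : ℝ)
    (hregime : (k₁ + k₂ + 6 * c) ^ 2 < 8 * (k₁ ^ 2 + k₂ ^ 2)) :
    ∀ θ : ℝ, jadeContrast k₁ k₂ c θ ≤ k₁ ^ 2 + k₂ ^ 2 ∧
      (jadeContrast k₁ k₂ c θ = k₁ ^ 2 + k₂ ^ 2 ↔ sin (2 * θ) = 0) := by
  intro θ
  have hkey := jade_key k₁ k₂ c θ
  have ht0 : (0:ℝ) ≤ sin (2 * θ) ^ 2 := sq_nonneg _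
  have ht1 : sin (2 * θ) ^ 2 ≤ 1 := sin_sq_le_one _
  -- the inner factor is strictly negative
  have hneg : (k₁ + k₂) * (6 * c - k₁ - k₂) +
      (6 * c - k₁ - k₂) ^ 2 * sin (2 * θ) ^ 2 / 4 - (k₁ - k₂) ^ 2 < 0 := by
    nlinarith [sq_nonneg (6 * c - k₁ - k₂), mul_le_of_le_one_right
      (sq_nonneg (6 * c - k₁ - k₂)) ht1]
  constructor
  · nlinarith
  · constructor
    · intro heq
      by_contra hne
      have hpos : 0 < sin (2 * θ) ^ 2 := by positivity
      nlinarith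
    · intro hs
      rw [hkey, hs]
      ring
end

section
/- Let σ, Z₁, Z₂ be real random variables on a probability space such that σ, Z₁, Z₂ are mutually independent, Z₁ and Z₂ are each standard Gaussian (law N(0,1)), E[σ²] = 1, and E[σ⁴] < ∞. Define ε₁ = σ·Z₁ and ε₂ = σ·Z₂, and set k₁ = E[ε₁⁴] − 3, k₂ = E[ε₂⁴] − 3, and c = E[ε₁²ε₂²] − 1. Then k₁ = k₂ = 3c, with c = E[σ⁴] − 1, and consequently (k₁ + k₂ + 6c)² = 8(k₁² + k₂²). -/
/-!
Independence factorises every joint moment of `ε_i = σ Z_i`: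
`E[(σZ₁)^a (σZ₂)^b] = E[σ^(a+b)] E[Z₁^a] E[Z₂^b]`. The even Gaussian moments
`E[Z^(2n)] = (2n-1)‼` (a Gamma-function integral) give `E[Z²] = 1` and `E[Z⁴] = 3`, hence
`E[ε_i⁴] = 3 E[σ⁴]` and `E[ε₁²ε₂²] = E[σ⁴]`, i.e. `k_i = 3c`; then both sides of the
identity equal `144 c²`.
-/

open MeasureTheory ProbabilityTheory Real
open scoped Nat

lemma integral_pow_two_mul_mul_exp_neg_sq_div_two (n : ℕ) :
    ∫ x : ℝ, x ^ (2 * n) * exp (-x ^ 2 / 2) = (2 * n - 1 : ℕ)‼ * √(2 * π) := by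
  have h_even : ∫ x : ℝ, x ^ (2 * n) * exp (-x ^ 2 / 2)
      = 2 * ∫ x in Set.Ioi (0 : ℝ), x ^ ((2 * n : ℕ) : ℝ) * exp (-(1 / 2) * x ^ (2 : ℝ)) := by
    calc ∫ x : ℝ, x ^ (2 * n) * exp (-x ^ 2 / 2)
        = ∫ x : ℝ, |x| ^ (2 * n) * exp (-|x| ^ 2 / 2) := by
          simp only [sq_abs, (even_two_mul n).pow_abs]
      _ = _ := by
          rw [integral_comp_abs (f := fun x => x ^ (2 * n) * exp (-x ^ 2 / 2))]
          congr 1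
          refine setIntegral_congr_fun measurableSet_Ioi fun x _ => ?_
          rw [rpow_natCast, rpow_two]
          ring_nf
  have h_pow : (1 / 2 : ℝ) ^ (-((2 * n : ℕ) + 1 : ℝ) / 2) = 2 ^ n * √2 := by
    rw [one_div, inv_rpow zero_le_two, ← rpow_neg zero_le_two, sqrt_eq_rpow, ← rpow_natCast,
      ← rpow_add zero_lt_two]
    push_cast
    ring_nf
  have h_gamma : Gamma (((2 * n : ℕ) + 1 : ℝ) / 2) = (2 * n - 1 : ℕ)‼ * √π / 2 ^ n := by
    rw [← Gamma_nat_add_half]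
    push_cast
    ring_nf
  rw [h_even, integral_rpow_mul_exp_neg_mul_rpow two_pos
    (by linarith [(2 * n : ℕ).cast_nonneg (α := ℝ)]) one_half_pos, h_pow, h_gamma,
    sqrt_mul zero_le_two]
  field_simp

lemma integral_pow_two_mul_gaussianReal (n : ℕ) :
    ∫ x, x ^ (2 * n) ∂gaussianReal 0 1 = (2 * n - 1 : ℕ)‼ := by
  have h_pdf (x : ℝ) : gaussianPDFReal 0 1 x = (√(2 * π))⁻¹ * exp (-x ^ 2 / 2) := by
    simp [gaussianPDFReal]
  simp_rw [integral_gaussianReal_eq_integral_smul one_ne_zero, smul_eq_mul, h_pdf, mul_assoc,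
    integral_const_mul, mul_comm (exp _), integral_pow_two_mul_mul_exp_neg_sq_div_two]
  have : 0 < √(2 * π) := by positivity
  field_simp

namespace ProbabilityTheory

variable {Ω : Type*} [MeasurableSpace Ω] {μ : Measure Ω}

lemma HasLaw.integral_pow_two_mul_of_gaussianReal {Z : Ω → ℝ}
    (hZ : HasLaw Z (gaussianReal 0 1) μ) (n : ℕ) :
    ∫ ω, Z ω ^ (2 * n) ∂μ = (2 * n - 1 : ℕ)‼ :=
  (hZ.integral_comp (f := fun x => x ^ (2 * n)) (by fun_prop)).trans
    (integral_pow_two_mul_gaussianReal n)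

lemma iIndepFun.integral_mul_pow_mul_mul_pow {σ Z₁ Z₂ : Ω → ℝ}
    (hindep : iIndepFun ![σ, Z₁, Z₂] μ) (hσ : AEMeasurable σ μ)
    (hZ₁ : AEMeasurable Z₁ μ) (hZ₂ : AEMeasurable Z₂ μ) (a b : ℕ) :
    ∫ ω, (σ ω * Z₁ ω) ^ a * (σ ω * Z₂ ω) ^ b ∂μ
      = (∫ ω, σ ω ^ (a + b) ∂μ) * (∫ ω, Z₁ ω ^ a ∂μ) * ∫ ω, Z₂ ω ^ b ∂μ := by
  have h := hindep.integral_fun_prod_comp (f := ![(· ^ (a + b)), (· ^ a), (· ^ b)])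
    (fun i => by fin_cases i <;> assumption) (fun i => by fin_cases i <;> simp <;> fun_prop)
  simp only [Fin.prod_univ_three, Matrix.cons_val] at h
  rw [← h]
  congr with ω
  ring

end ProbabilityTheory

theorem stmt_6_general {Ω : Type*} [MeasurableSpace Ω] (μ : Measure Ω)
    [IsProbabilityMeasure μ] (σ Z₁ Z₂ : Ω → ℝ)
    (hσmeas : Measurable σ) (hZ₁meas : Measurable Z₁) (hZ₂meas : Measurable Z₂)
    (hindep : iIndepFun ![σ, Z₁, Z₂] μ)
    (hZ₁law : μ.map Z₁ = gaussianReal 0 1)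
    (hZ₂law : μ.map Z₂ = gaussianReal 0 1)
    (k₁ k₂ c : ℝ)
    (hk₁ : k₁ = (∫ ω, (σ ω * Z₁ ω) ^ 4 ∂μ) - 3)
    (hk₂ : k₂ = (∫ ω, (σ ω * Z₂ ω) ^ 4 ∂μ) - 3)
    (hc : c = (∫ ω, (σ ω * Z₁ ω) ^ 2 * (σ ω * Z₂ ω) ^ 2 ∂μ) - 1) :
    k₁ = 3 * c ∧ k₂ = 3 * c ∧ c = (∫ ω, σ ω ^ 4 ∂μ) - 1 ∧
      (k₁ + k₂ + 6 * c) ^ 2 = 8 * (k₁ ^ 2 + k₂ ^ 2) := by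
  have hZ₁ : HasLaw Z₁ (gaussianReal 0 1) μ := ⟨hZ₁meas.aemeasurable, hZ₁law⟩
  have hZ₂ : HasLaw Z₂ (gaussianReal 0 1) μ := ⟨hZ₂meas.aemeasurable, hZ₂law⟩
  have hZ₁_sq : ∫ ω, Z₁ ω ^ 2 ∂μ = 1 := by
    simpa using hZ₁.integral_pow_two_mul_of_gaussianReal 1
  have hZ₂_sq : ∫ ω, Z₂ ω ^ 2 ∂μ = 1 := by
    simpa using hZ₂.integral_pow_two_mul_of_gaussianReal 1
  have hZ₁_four : ∫ ω, Z₁ ω ^ 4 ∂μ = 3 := by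
    simpa [Nat.doubleFactorial] using hZ₁.integral_pow_two_mul_of_gaussianReal 2
  have hZ₂_four : ∫ ω, Z₂ ω ^ 4 ∂μ = 3 := by
    simpa [Nat.doubleFactorial] using hZ₂.integral_pow_two_mul_of_gaussianReal 2
  have hmoment := hindep.integral_mul_pow_mul_mul_pow hσmeas.aemeasurable
    hZ₁meas.aemeasurable hZ₂meas.aemeasurable
  have hσZ₁_four : ∫ ω, (σ ω * Z₁ ω) ^ 4 ∂μ = 3 * ∫ ω, σ ω ^ 4 ∂μ := by
    simpa [hZ₁_four, mul_comm] using hmoment 4 0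
  have hσZ₂_four : ∫ ω, (σ ω * Z₂ ω) ^ 4 ∂μ = 3 * ∫ ω, σ ω ^ 4 ∂μ := by
    simpa [hZ₂_four, mul_comm] using hmoment 0 4
  have hc' : c = (∫ ω, σ ω ^ 4 ∂μ) - 1 := by
    rw [hc, hmoment, hZ₁_sq, hZ₂_sq, mul_one, mul_one]
  have hk₁' : k₁ = 3 * c := by
    rw [hk₁, hσZ₁_four, hc']; ring
  have hk₂' : k₂ = 3 * c := by
    rw [hk₂, hσZ₂_four, hc']; ring
  refine ⟨hk₁', hk₂', hc', ?_⟩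
  rw [hk₁', hk₂']
  ring

/-- Gaussian scale mixtures lie on the boundary of the JADE reversal criterion: if
`ε_i = σ·Z_i` with `σ, Z₁, Z₂` mutually independent, `Z₁, Z₂` standard Gaussian,
`E[σ²] = 1` and `E[σ⁴] < ∞`, then `k₁ = k₂ = 3c` with `c = E[σ⁴] − 1`, hence
`(k₁ + k₂ + 6c)² = 8(k₁² + k₂²)`. -/
theorem stmt_6 {Ω : Type*} [MeasurableSpace Ω] (μ : Measure Ω)
    [IsProbabilityMeasure μ] (σ Z₁ Z₂ : Ω → ℝ)
    (hσmeas : Measurable σ) (hZ₁meas : Measurable Z₁) (hZ₂meas : Measurable Z₂)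
    (hindep : iIndepFun ![σ, Z₁, Z₂] μ)
    (hZ₁law : μ.map Z₁ = gaussianReal 0 1)
    (hZ₂law : μ.map Z₂ = gaussianReal 0 1)
    (hσ2 : ∫ ω, σ ω ^ 2 ∂μ = 1)
    (hσ4 : Integrable (fun ω => σ ω ^ 4) μ)
    (k₁ k₂ c : ℝ)
    (hk₁ : k₁ = (∫ ω, (σ ω * Z₁ ω) ^ 4 ∂μ) - 3)
    (hk₂ : k₂ = (∫ ω, (σ ω * Z₂ ω) ^ 4 ∂μ) - 3)
    (hc : c = (∫ ω, (σ ω * Z₁ ω) ^ 2 * (σ ω * Z₂ ω) ^ 2 ∂μ) - 1) :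
    k₁ = 3 * c ∧ k₂ = 3 * c ∧ c = (∫ ω, σ ω ^ 4 ∂μ) - 1 ∧
      (k₁ + k₂ + 6 * c) ^ 2 = 8 * (k₁ ^ 2 + k₂ ^ 2) :=
  stmt_6_general μ σ Z₁ Z₂ hσmeas hZ₁meas hZ₂meas hindep hZ₁law hZ₂law k₁ k₂ c hk₁ hk₂ hc
end

section
/- Let ε₁, ε₂ be real random variables on a probability space with E[ε₁] = E[ε₂] = 0, E[ε₁²] = E[ε₂²] = 1, E[ε₁ε₂] = 0, and finite fourth moments. Set k₁ = E[ε₁⁴] − 3, k₂ = E[ε₂⁴] − 3, c = E[ε₁²ε₂²] − 1, and let X₁ = ε₁, X₂ = ε₁ + ε₂, and R = X₁ − (1/2)·X₂. Then Cov(X₁², (X₂ − X₁)²) = c and Cov(X₂², R²) = (k₁ + k₂ − 2c)/4. Consequently, if k₁ > 0, k₂ > 0, c > 0 and c > (k₁ + k₂)/6, then |Cov(X₂², R²)| < |Cov(X₁², (X₂ − X₁)²)|. -/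
/-!
Since `X₂ − X₁ = ε₂`, the first score is `E[ε₁²ε₂²] − 1 = c`. For the second,
`R = (ε₁ − ε₂)/2` and `X₂ R = (ε₁² − ε₂²)/2`, so each moment involved is a second moment of a
combination `a U + b V`, expanded as `a² E[U²] + 2ab E[UV] + b² E[V²]` with `(U, V) = (ε₁, ε₂)`
or `(ε₁², ε₂²)`.
-/

open MeasureTheory

instance ENNReal.holderTriple_four_four_two : ENNReal.HolderTriple 4 4 2 :=
  ⟨by rw [show (4 : ENNReal) = 2 * 2 by norm_num, ENNReal.mul_inv (by simp) (by simp), ← two_mul,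
    ← mul_assoc, ENNReal.mul_inv_cancel (by simp) (by simp), one_mul]⟩

namespace MeasureTheory

variable {Ω : Type*} [MeasurableSpace Ω] {μ : Measure Ω} {f g : Ω → ℝ}

lemma MemLp.sq_memLp_two (hf : MemLp f 4 μ) : MemLp (fun ω => f ω ^ 2) 2 μ := by
  simpa only [sq] using hf.mul' hf

lemma integral_mul_add_mul_sq (hf : MemLp f 2 μ) (hg : MemLp g 2 μ) (a b : ℝ) :
    ∫ ω, (a * f ω + b * g ω) ^ 2 ∂μ =
      a ^ 2 * ∫ ω, f ω ^ 2 ∂μ + 2 * a * b * ∫ ω, f ω * g ω ∂μ + b ^ 2 * ∫ ω, g ω ^ 2 ∂μ := by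
  have hff : Integrable (fun ω => a ^ 2 * f ω ^ 2) μ := hf.integrable_sq.const_mul _
  have hfg : Integrable (fun ω => 2 * a * b * (f ω * g ω)) μ :=
    (hf.integrable_mul hg).const_mul _
  have hgg : Integrable (fun ω => b ^ 2 * g ω ^ 2) μ := hg.integrable_sq.const_mul _
  have hexpand : (fun ω => (a * f ω + b * g ω) ^ 2) =
      fun ω => a ^ 2 * f ω ^ 2 + 2 * a * b * (f ω * g ω) + b ^ 2 * g ω ^ 2 := by
    ext ω; ring
  rw [hexpand, integral_add (hff.add hfg : Integrable (fun ω => _ + _) μ) hgg, integral_add hff hfg, integral_const_mul,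
    integral_const_mul, integral_const_mul]

end MeasureTheory

theorem stmt_8_general {Ω : Type*} [MeasurableSpace Ω] (μ : Measure Ω)
    [IsProbabilityMeasure μ] (ε₁ ε₂ : Ω → ℝ)
    (h14 : MemLp ε₁ 4 μ) (h24 : MemLp ε₂ 4 μ)
    (hv1 : ∫ ω, ε₁ ω ^ 2 ∂μ = 1) (hv2 : ∫ ω, ε₂ ω ^ 2 ∂μ = 1)
    (hcov : ∫ ω, ε₁ ω * ε₂ ω ∂μ = 0)
    (k₁ k₂ c : ℝ)
    (hk₁ : k₁ = (∫ ω, ε₁ ω ^ 4 ∂μ) - 3) (hk₂ : k₂ = (∫ ω, ε₂ ω ^ 4 ∂μ) - 3)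
    (hc : c = (∫ ω, ε₁ ω ^ 2 * ε₂ ω ^ 2 ∂μ) - 1)
    (X₁ X₂ R : Ω → ℝ)
    (hX₁ : X₁ = ε₁) (hX₂ : X₂ = fun ω => ε₁ ω + ε₂ ω)
    (hR : R = fun ω => X₁ ω - (1 / 2) * X₂ ω) :
    ((∫ ω, X₁ ω ^ 2 * (X₂ ω - X₁ ω) ^ 2 ∂μ) -
      (∫ ω, X₁ ω ^ 2 ∂μ) * (∫ ω, (X₂ ω - X₁ ω) ^ 2 ∂μ) = c) ∧
    ((∫ ω, X₂ ω ^ 2 * R ω ^ 2 ∂μ) -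
      (∫ ω, X₂ ω ^ 2 ∂μ) * (∫ ω, R ω ^ 2 ∂μ) = (k₁ + k₂ - 2 * c) / 4) ∧
    (0 < k₁ → 0 < k₂ → 0 < c → (k₁ + k₂) / 6 < c →
      |(∫ ω, X₂ ω ^ 2 * R ω ^ 2 ∂μ) -
        (∫ ω, X₂ ω ^ 2 ∂μ) * (∫ ω, R ω ^ 2 ∂μ)| <
      |(∫ ω, X₁ ω ^ 2 * (X₂ ω - X₁ ω) ^ 2 ∂μ) -
        (∫ ω, X₁ ω ^ 2 ∂μ) * (∫ ω, (X₂ ω - X₁ ω) ^ 2 ∂μ)|) := by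
  subst R X₂ X₁
  have h12 : MemLp ε₁ 2 μ := h14.mono_exponent (by norm_num)
  have h22 : MemLp ε₂ 2 μ := h24.mono_exponent (by norm_num)
  have hX₂ : ∫ ω, (ε₁ ω + ε₂ ω) ^ 2 ∂μ = 2 := by
    simpa [hv1, hv2, hcov, one_add_one_eq_two] using integral_mul_add_mul_sq h12 h22 1 1
  have hR : ∫ ω, (ε₁ ω - 1 / 2 * (ε₁ ω + ε₂ ω)) ^ 2 ∂μ = 1 / 2 := by
    calc ∫ ω, (ε₁ ω - 1 / 2 * (ε₁ ω + ε₂ ω)) ^ 2 ∂μ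
        = ∫ ω, (1 / 2 * ε₁ ω + -1 / 2 * ε₂ ω) ^ 2 ∂μ := by congr 1 with ω; ring
      _ = 1 / 2 := by rw [integral_mul_add_mul_sq h12 h22, hv1, hv2, hcov]; norm_num
  have hX₂R : ∫ ω, (ε₁ ω + ε₂ ω) ^ 2 * (ε₁ ω - 1 / 2 * (ε₁ ω + ε₂ ω)) ^ 2 ∂μ =
      ((∫ ω, ε₁ ω ^ 4 ∂μ) + (∫ ω, ε₂ ω ^ 4 ∂μ) - 2 * ∫ ω, ε₁ ω ^ 2 * ε₂ ω ^ 2 ∂μ) / 4 := by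
    calc ∫ ω, (ε₁ ω + ε₂ ω) ^ 2 * (ε₁ ω - 1 / 2 * (ε₁ ω + ε₂ ω)) ^ 2 ∂μ
        = ∫ ω, (1 / 2 * ε₁ ω ^ 2 + -1 / 2 * ε₂ ω ^ 2) ^ 2 ∂μ := by congr 1 with ω; ring
      _ = _ := by
        rw [integral_mul_add_mul_sq h14.sq_memLp_two h24.sq_memLp_two]
        simp only [← pow_mul]
        ring
  have hscore₁ : (∫ ω, ε₁ ω ^ 2 * (ε₁ ω + ε₂ ω - ε₁ ω) ^ 2 ∂μ) -
      (∫ ω, ε₁ ω ^ 2 ∂μ) * (∫ ω, (ε₁ ω + ε₂ ω - ε₁ ω) ^ 2 ∂μ) = c := by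
    simp only [add_sub_cancel_left, hv1, hv2, hc, mul_one]
  have hscore₂ : (∫ ω, (ε₁ ω + ε₂ ω) ^ 2 * (ε₁ ω - 1 / 2 * (ε₁ ω + ε₂ ω)) ^ 2 ∂μ) -
      (∫ ω, (ε₁ ω + ε₂ ω) ^ 2 ∂μ) * (∫ ω, (ε₁ ω - 1 / 2 * (ε₁ ω + ε₂ ω)) ^ 2 ∂μ) =
      (k₁ + k₂ - 2 * c) / 4 := by
    rw [hX₂R, hX₂, hR, hk₁, hk₂, hc]; ring
  refine ⟨hscore₁, hscore₂, fun _ _ hc_pos hgap => ?_⟩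
  rw [hscore₁, hscore₂, abs_of_pos hc_pos, abs_lt]
  constructor <;> linarith

/-- Population failure of residual-based LiNGAM: in the model `X₁ = ε₁`, `X₂ = ε₁ + ε₂`
with `R = X₁ − (1/2)·X₂`, the dependence scores satisfy
`Cov(X₁², (X₂−X₁)²) = c` and `Cov(X₂², R²) = (k₁+k₂−2c)/4`; hence if
`k₁, k₂, c > 0` and `c > (k₁+k₂)/6`, the incorrect variable `X₂` obtains the strictly
smaller score. -/
theorem stmt_8 {Ω : Type*} [MeasurableSpace Ω] (μ : Measure Ω)
    [IsProbabilityMeasure μ] (ε₁ ε₂ : Ω → ℝ)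
    (h1meas : Measurable ε₁) (h2meas : Measurable ε₂)
    (h14 : MemLp ε₁ 4 μ) (h24 : MemLp ε₂ 4 μ)
    (hm1 : ∫ ω, ε₁ ω ∂μ = 0) (hm2 : ∫ ω, ε₂ ω ∂μ = 0)
    (hv1 : ∫ ω, ε₁ ω ^ 2 ∂μ = 1) (hv2 : ∫ ω, ε₂ ω ^ 2 ∂μ = 1)
    (hcov : ∫ ω, ε₁ ω * ε₂ ω ∂μ = 0)
    (k₁ k₂ c : ℝ)
    (hk₁ : k₁ = (∫ ω, ε₁ ω ^ 4 ∂μ) - 3) (hk₂ : k₂ = (∫ ω, ε₂ ω ^ 4 ∂μ) - 3)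
    (hc : c = (∫ ω, ε₁ ω ^ 2 * ε₂ ω ^ 2 ∂μ) - 1)
    (X₁ X₂ R : Ω → ℝ)
    (hX₁ : X₁ = ε₁) (hX₂ : X₂ = fun ω => ε₁ ω + ε₂ ω)
    (hR : R = fun ω => X₁ ω - (1 / 2) * X₂ ω) :
    ((∫ ω, X₁ ω ^ 2 * (X₂ ω - X₁ ω) ^ 2 ∂μ) -
      (∫ ω, X₁ ω ^ 2 ∂μ) * (∫ ω, (X₂ ω - X₁ ω) ^ 2 ∂μ) = c) ∧
    ((∫ ω, X₂ ω ^ 2 * R ω ^ 2 ∂μ) -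
      (∫ ω, X₂ ω ^ 2 ∂μ) * (∫ ω, R ω ^ 2 ∂μ) = (k₁ + k₂ - 2 * c) / 4) ∧
    (0 < k₁ → 0 < k₂ → 0 < c → (k₁ + k₂) / 6 < c →
      |(∫ ω, X₂ ω ^ 2 * R ω ^ 2 ∂μ) -
        (∫ ω, X₂ ω ^ 2 ∂μ) * (∫ ω, R ω ^ 2 ∂μ)| <
      |(∫ ω, X₁ ω ^ 2 * (X₂ ω - X₁ ω) ^ 2 ∂μ) -
        (∫ ω, X₁ ω ^ 2 ∂μ) * (∫ ω, (X₂ ω - X₁ ω) ^ 2 ∂μ)|) :=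
  stmt_8_general μ ε₁ ε₂ h14 h24 hv1 hv2 hcov k₁ k₂ c hk₁ hk₂ hc X₁ X₂ R hX₁ hX₂ hR
end

section
/- Fix integers p ≥ 1 and d ≥ 3, a probability space (Ω, F, P), random variables ε₁, …, ε_p with E[ε_k] = 0 and E[|ε_k|^d] < ∞ for all k, and a real p×p matrix A. Define X_i = Σ_{k=1}^p A_{ik}·ε_k for each i. Suppose j is an index with A_{jk} = 0 for all k ≠ j and A_{jj} = 1 (so X_j = ε_j), and suppose E[ε_j·ε_k] = 0 and E[ε_j^{d−1}·ε_k] = 0 for all k ≠ j. Then for every i: E[X_i·X_j^{d−1}] = A_{ij}·E[X_j^d], E[X_i·X_j] = A_{ij}·E[X_j²], and hence S_{ij}^{(d)} := E[X_i·X_j^{d−1}]·E[X_j²] − E[X_i·X_j]·E[X_j^d] = 0. -/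
open MeasureTheory

/-- Source identity of LiMIAM: in the linear model `X = A·ε`, if `j` is a source node
(row `j` of `A` is the `j`-th standard basis vector) and the disturbances satisfy the
one-sided moment restrictions `E[ε_j·ε_k] = 0` and `E[ε_j^{d−1}·ε_k] = 0` for `k ≠ j`,
then `E[X_i·X_j^{d−1}] = A_{ij}·E[X_j^d]`, `E[X_i·X_j] = A_{ij}·E[X_j²]`, and the score
`S_{ij}^{(d)}` vanishes for every `i`. -/
theorem stmt_9 {Ω : Type*} [MeasurableSpace Ω] (μ : Measure Ω)
    [IsProbabilityMeasure μ] (p d : ℕ) (hp : 1 ≤ p) (hd : 3 ≤ d)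
    (ε : Fin p → Ω → ℝ) (hmeas : ∀ k, Measurable (ε k))
    (hmean : ∀ k, ∫ ω, ε k ω ∂μ = 0)
    (hmomfin : ∀ k, Integrable (fun ω => |ε k ω| ^ d) μ)
    (A : Matrix (Fin p) (Fin p) ℝ)
    (X : Fin p → Ω → ℝ) (hX : ∀ i, X i = fun ω => ∑ k, A i k * ε k ω)
    (j : Fin p) (hAjj : A j j = 1) (hAj : ∀ k, k ≠ j → A j k = 0)
    (horth : ∀ k, k ≠ j → ∫ ω, ε j ω * ε k ω ∂μ = 0)
    (hmom : ∀ k, k ≠ j → ∫ ω, ε j ω ^ (d - 1) * ε k ω ∂μ = 0) :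
    ∀ i : Fin p,
      (∫ ω, X i ω * X j ω ^ (d - 1) ∂μ = A i j * ∫ ω, X j ω ^ d ∂μ) ∧
      (∫ ω, X i ω * X j ω ∂μ = A i j * ∫ ω, X j ω ^ 2 ∂μ) ∧
      (∫ ω, X i ω * X j ω ^ (d - 1) ∂μ) * (∫ ω, X j ω ^ 2 ∂μ) -
        (∫ ω, X i ω * X j ω ∂μ) * (∫ ω, X j ω ^ d ∂μ) = 0 := by
  have hd1 : d - 1 + 1 = d := by omega
  -- X j = ε j
  have hXj : X j = ε j := by
    funext ω
    rw [hX]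
    simp only
    rw [Finset.sum_eq_single j]
    · rw [hAjj, one_mul]
    · intro k _ hk; rw [hAj k hk, zero_mul]
    · intro h; exact absurd (Finset.mem_univ j) h
  -- pointwise bounds
  have key1 : ∀ a b : ℝ, |a * b ^ (d - 1)| ≤ |a| ^ d + |b| ^ d := by
    intro a b
    rw [abs_mul, abs_pow]
    rcases le_total |a| |b| with h | h
    · calc |a| * |b| ^ (d - 1) ≤ |b| * |b| ^ (d - 1) :=
            mul_le_mul_of_nonneg_right h (by positivity)
        _ = |b| ^ (d - 1) * |b| := mul_comm _ _
        _ = |b| ^ d := by rw [← pow_succ, hd1]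
        _ ≤ |a| ^ d + |b| ^ d := le_add_of_nonneg_left (by positivity)
    · calc |a| * |b| ^ (d - 1) ≤ |a| * |a| ^ (d - 1) :=
            mul_le_mul_of_nonneg_left (pow_le_pow_left₀ (abs_nonneg _) h _) (abs_nonneg _)
        _ = |a| ^ (d - 1) * |a| := mul_comm _ _
        _ = |a| ^ d := by rw [← pow_succ, hd1]
        _ ≤ |a| ^ d + |b| ^ d := le_add_of_nonneg_right (by positivity)
  have key2 : ∀ a b : ℝ, |a * b| ≤ 1 + (|a| ^ d + |b| ^ d) := by
    intro a b
    set m := max |a| |b| with hm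
    have hmn : 0 ≤ m := le_trans (abs_nonneg a) (le_max_left _ _)
    have h1 : |a * b| ≤ m ^ 2 := by
      rw [abs_mul, sq]
      exact mul_le_mul (le_max_left _ _) (le_max_right _ _) (abs_nonneg _) hmn
    have h2 : m ^ d ≤ |a| ^ d + |b| ^ d := by
      rcases max_cases |a| |b| with ⟨he, _⟩ | ⟨he, _⟩ <;> rw [hm, he]
      · exact le_add_of_nonneg_right (by positivity)
      · exact le_add_of_nonneg_left (by positivity)
    rcases le_total m 1 with hm1 | hm1
    · calc |a * b| ≤ m ^ 2 := h1
        _ ≤ 1 := pow_le_one₀ hmn hm1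
        _ ≤ 1 + (|a| ^ d + |b| ^ d) := le_add_of_nonneg_right (by positivity)
    · calc |a * b| ≤ m ^ 2 := h1
        _ ≤ m ^ d := pow_le_pow_right₀ hm1 (by omega)
        _ ≤ |a| ^ d + |b| ^ d := h2
        _ ≤ 1 + (|a| ^ d + |b| ^ d) := le_add_of_nonneg_left zero_le_one
  -- integrability
  have int1 : ∀ k, Integrable (fun ω => ε k ω * ε j ω ^ (d - 1)) μ := by
    intro k
    refine Integrable.mono' ((hmomfin k).add (hmomfin j))
      ((hmeas k).mul ((hmeas j).pow_const _)).aestronglyMeasurable ?_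
    filter_upwards with ω
    exact key1 _ _
  have int2 : ∀ k, Integrable (fun ω => ε k ω * ε j ω) μ := by
    intro k
    refine Integrable.mono' ((integrable_const 1).add ((hmomfin k).add (hmomfin j)))
      ((hmeas k).mul (hmeas j)).aestronglyMeasurable ?_
    filter_upwards with ω
    exact key2 _ _
  -- the d-th and 2nd moments of ε j
  have hjd : (fun ω => ε j ω * ε j ω ^ (d - 1)) = fun ω => ε j ω ^ d := by
    funext ω; rw [mul_comm, ← pow_succ, hd1]
  have hj2 : (fun ω => ε j ω * ε j ω) = fun ω => ε j ω ^ 2 := by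
    funext ω; rw [sq]
  intro i
  have h1 : ∫ ω, X i ω * X j ω ^ (d - 1) ∂μ = A i j * ∫ ω, X j ω ^ d ∂μ := by
    rw [hXj, hX i]
    simp only
    have heq : (fun ω => (∑ k, A i k * ε k ω) * ε j ω ^ (d - 1)) =
        fun ω => ∑ k, A i k * (ε k ω * ε j ω ^ (d - 1)) := by
      funext ω
      rw [Finset.sum_mul]
      exact Finset.sum_congr rfl fun k _ => (mul_assoc _ _ _)
    rw [heq, integral_finset_sum _ fun k _ => ((int1 k).const_mul _)]
    rw [Finset.sum_eq_single j]
    · rw [integral_const_mul, hjd]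
    · intro k _ hk
      rw [integral_const_mul]
      have : ∫ ω, ε k ω * ε j ω ^ (d - 1) ∂μ = ∫ ω, ε j ω ^ (d - 1) * ε k ω ∂μ := by
        congr 1; funext ω; ring
      rw [this, hmom k hk, mul_zero]
    · intro h; exact absurd (Finset.mem_univ j) h
  have h2 : ∫ ω, X i ω * X j ω ∂μ = A i j * ∫ ω, X j ω ^ 2 ∂μ := by
    rw [hXj, hX i]
    simp only
    have heq : (fun ω => (∑ k, A i k * ε k ω) * ε j ω) =
        fun ω => ∑ k, A i k * (ε k ω * ε j ω) := by
      funext ω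
      rw [Finset.sum_mul]
      exact Finset.sum_congr rfl fun k _ => (mul_assoc _ _ _)
    rw [heq, integral_finset_sum _ fun k _ => ((int2 k).const_mul _)]
    rw [Finset.sum_eq_single j]
    · rw [integral_const_mul, hj2]
    · intro k _ hk
      rw [integral_const_mul]
      have : ∫ ω, ε k ω * ε j ω ∂μ = ∫ ω, ε j ω * ε k ω ∂μ := by
        congr 1; funext ω; ring
      rw [this, horth k hk, mul_zero]
    · intro h; exact absurd (Finset.mem_univ j) h
  exact ⟨h1, h2, by rw [h1, h2]; ring⟩
end

section
/- Fix an integer p ≥ 1, a probability space (Ω, F, P), square-integrable random variables ε₁, …, ε_p with E[ε_k] = 0 for all k, and a real p×p matrix A. Define X_i = Σ_{k=1}^p A_{ik}·ε_k. Suppose j is an index with A_{jk} = 0 for all k ≠ j and A_{jj} = 1 (so X_j = ε_j), that E[ε_j·ε_k] = 0 for all k ≠ j, and that E[ε_j²] > 0. Then for every i ≠ j, the residual X_i − (E[X_i·X_j]/E[X_j²])·X_j equals Σ_{k ≠ j} A_{ik}·ε_k pointwise almost surely; that is, regressing out the source variable X_j removes the disturbance ε_j from every remaining variable. -/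
/-!
Since row `j` of `A` is the `j`-th unit vector, `X_j = ε_j`. Expanding `X_i = Σ_k A_{ik} ε_k`
and using `E[ε_j ε_k] = 0` for `k ≠ j` gives `E[X_i X_j] = A_{ij} E[ε_j²]`, so the regression
coefficient is exactly `A_{ij}` and subtracting `A_{ij} ε_j` leaves `Σ_{k ≠ j} A_{ik} ε_k`.
-/

open MeasureTheory Finset

section Residual

variable {Ω ι : Type*} [MeasurableSpace Ω] {μ : Measure Ω} [Fintype ι]
  {ε : ι → Ω → ℝ} {j : ι}

theorem integral_sum_mul_eq_of_orthogonal (hL2 : ∀ k, MemLp (ε k) 2 μ)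
    (horth : ∀ k, k ≠ j → ∫ ω, ε j ω * ε k ω ∂μ = 0) (a : ι → ℝ) :
    ∫ ω, (∑ k, a k * ε k ω) * ε j ω ∂μ = a j * ∫ ω, ε j ω ^ 2 ∂μ := by
  have hint : ∀ k, Integrable (fun ω => ε j ω * ε k ω) μ := fun k =>
    (hL2 j).integrable_mul (hL2 k) (p := 2) (q := 2)
  calc ∫ ω, (∑ k, a k * ε k ω) * ε j ω ∂μ
      = ∑ k, a k * ∫ ω, ε j ω * ε k ω ∂μ := by
        simp_rw [sum_mul, mul_assoc, mul_comm (ε _ _) (ε j _)]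
        rw [integral_finsetSum _ fun k _ => (hint k).const_mul (a k)]
        simp_rw [integral_const_mul]
    _ = a j * ∫ ω, ε j ω * ε j ω ∂μ :=
        Fintype.sum_eq_single j fun k hk => by rw [horth k hk, mul_zero]
    _ = a j * ∫ ω, ε j ω ^ 2 ∂μ := by simp_rw [sq]

theorem sum_sub_regression_eq_sum_erase [DecidableEq ι] (hL2 : ∀ k, MemLp (ε k) 2 μ)
    (horth : ∀ k, k ≠ j → ∫ ω, ε j ω * ε k ω ∂μ = 0) (hvar : ∫ ω, ε j ω ^ 2 ∂μ ≠ 0)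
    (a : ι → ℝ) :
    (fun ω => ∑ k, a k * ε k ω -
        ((∫ ω', (∑ k, a k * ε k ω') * ε j ω' ∂μ) / ∫ ω', ε j ω' ^ 2 ∂μ) * ε j ω)
      = fun ω => ∑ k ∈ univ.erase j, a k * ε k ω := by
  rw [integral_sum_mul_eq_of_orthogonal hL2 horth, mul_div_cancel_right₀ _ hvar]
  funext ω
  rw [sum_erase_eq_sub (mem_univ j)]

end Residual

theorem stmt_10_general {Ω : Type*} [MeasurableSpace Ω] (μ : Measure Ω)
    (p : ℕ) (ε : Fin p → Ω → ℝ) (hL2 : ∀ k, MemLp (ε k) 2 μ)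
    (A : Matrix (Fin p) (Fin p) ℝ)
    (X : Fin p → Ω → ℝ) (hX : ∀ i, X i = fun ω => ∑ k, A i k * ε k ω)
    (j : Fin p) (hAjj : A j j = 1) (hAj : ∀ k, k ≠ j → A j k = 0)
    (horth : ∀ k, k ≠ j → ∫ ω, ε j ω * ε k ω ∂μ = 0)
    (hvar : 0 < ∫ ω, ε j ω ^ 2 ∂μ) :
    ∀ i : Fin p, i ≠ j →
      (fun ω => X i ω -
          ((∫ ω', X i ω' * X j ω' ∂μ) / ∫ ω', X j ω' ^ 2 ∂μ) * X j ω)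
        =ᵐ[μ] fun ω => ∑ k ∈ Finset.univ.erase j, A i k * ε k ω := by
  intro i _
  have hXj : X j = ε j := by
    funext ω
    calc X j ω = ∑ k, A j k * ε k ω := by rw [hX j]
      _ = A j j * ε j ω := Fintype.sum_eq_single j fun k hk => by rw [hAj k hk, zero_mul]
      _ = ε j ω := by rw [hAjj, one_mul]
  rw [hXj, hX i]
  exact (sum_sub_regression_eq_sum_erase hL2 horth hvar.ne' (A i)).eventuallyEq

/-- Residualization step of LiMIAM: in the linear model `X = A·ε`, if `j` is a source
node (row `j` of `A` is the `j`-th standard basis vector), the disturbances are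
square-integrable, mean zero, `E[ε_j·ε_k] = 0` for `k ≠ j`, and `E[ε_j²] > 0`, then for
every `i ≠ j` the population least-squares residual of `X_i` regressed on `X_j` equals
`Σ_{k ≠ j} A_{ik}·ε_k` almost surely. -/
theorem stmt_10 {Ω : Type*} [MeasurableSpace Ω] (μ : Measure Ω)
    [IsProbabilityMeasure μ] (p : ℕ) (hp : 1 ≤ p)
    (ε : Fin p → Ω → ℝ) (hmeas : ∀ k, Measurable (ε k))
    (hL2 : ∀ k, MemLp (ε k) 2 μ)
    (hmean : ∀ k, ∫ ω, ε k ω ∂μ = 0)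
    (A : Matrix (Fin p) (Fin p) ℝ)
    (X : Fin p → Ω → ℝ) (hX : ∀ i, X i = fun ω => ∑ k, A i k * ε k ω)
    (j : Fin p) (hAjj : A j j = 1) (hAj : ∀ k, k ≠ j → A j k = 0)
    (horth : ∀ k, k ≠ j → ∫ ω, ε j ω * ε k ω ∂μ = 0)
    (hvar : 0 < ∫ ω, ε j ω ^ 2 ∂μ) :
    ∀ i : Fin p, i ≠ j →
      (fun ω => X i ω -
          ((∫ ω', X i ω' * X j ω' ∂μ) / ∫ ω', X j ω' ^ 2 ∂μ) * X j ω)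
        =ᵐ[μ] fun ω => ∑ k ∈ Finset.univ.erase j, A i k * ε k ω :=
  stmt_10_general μ p ε hL2 A X hX j hAjj hAj horth hvar
end

section
/- Fix an integer p ≥ 1, a probability space (Ω, F, P), square-integrable random variables ε₁, …, ε_p with E[ε_k] = 0 for all k, and a real p×p matrix A. Define X_i = Σ_{k=1}^p A_{ik}·ε_k. Suppose j is an index with A_{jk} = 0 for all k ≠ j and A_{jj} = 1 (so X_j = ε_j), with E[ε_j²] > 0, and suppose that for every k ≠ j the conditional expectation of ε_k given the σ-algebra generated by ε_j is 0 almost surely. Then for every i ≠ j: E[X_i·X_j] = A_{ij}·E[X_j²], and the residual R_{i|j} = X_i − (E[X_i·X_j]/E[X_j²])·X_j satisfies E[R_{i|j} | σ(X_j)] = 0 almost surely. -/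
/-!
Mean independence of `ε_k` from `ε_j` makes `ε_k` uncorrelated with every `σ(ε_j)`-measurable
variable, in particular with `ε_j` itself. Hence `E[X_i X_j] = A_{ij} E[ε_j²]`, the regression
coefficient is `A_{ij}`, and the residual is `∑_{k ≠ j} A_{ik} ε_k`, a combination of variables
whose conditional expectations given `σ(ε_j)` all vanish.
-/

open MeasureTheory Filter

section MeanIndependence

variable {Ω : Type*} {m m₀ : MeasurableSpace Ω} {μ : Measure[m₀] Ω}

theorem integral_mul_eq_zero_of_condExp_eq_zero (hm : m ≤ m₀) [SigmaFinite (μ.trim hm)]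
    {f g : Ω → ℝ} (hg : StronglyMeasurable[m] g) (hgf : Integrable (g * f) μ)
    (hf : Integrable f μ) (hf0 : μ[f | m] =ᵐ[μ] 0) :
    ∫ ω, f ω * g ω ∂μ = 0 := by
  have hgf0 : μ[g * f | m] =ᵐ[μ] 0 := by
    filter_upwards [condExp_mul_of_stronglyMeasurable_left hg hgf hf, hf0] with ω hω hω0
    simp [hω, hω0]
  calc ∫ ω, f ω * g ω ∂μ = ∫ ω, (μ[g * f | m]) ω ∂μ := by
        rw [integral_condExp hm]
        simp_rw [Pi.mul_apply, mul_comm]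
    _ = 0 := by simp [integral_congr_ae hgf0]

theorem condExp_finsetSum_smul_eq_zero {E ι : Type*} [NormedAddCommGroup E] [NormedSpace ℝ E]
    [CompleteSpace E] {s : Finset ι} (c : ι → ℝ) {f : ι → Ω → E}
    (hf : ∀ k ∈ s, Integrable (f k) μ) (hf0 : ∀ k ∈ s, μ[f k | m] =ᵐ[μ] 0) :
    μ[∑ k ∈ s, c k • f k | m] =ᵐ[μ] 0 := by
  have hsmul0 : ∀ k ∈ s, μ[c k • f k | m] =ᵐ[μ] 0 := fun k hk =>
    (condExp_smul (c k) (f k) m).trans <| by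
      filter_upwards [hf0 k hk] with ω hω
      simp [hω]
  refine (condExp_finsetSum (fun k hk => (hf k hk).smul (c k)) m).trans ?_
  simpa using eventuallyEq_sum hsmul0

end MeanIndependence

section LinearModel

variable {Ω ι : Type*} [Fintype ι]

theorem sum_mul_eq_of_eq_single {a x : ι → ℝ} {j : ι} (hj : a j = 1)
    (ha : ∀ k, k ≠ j → a k = 0) : ∑ k, a k * x k = x j := by
  rw [Finset.sum_eq_single_of_mem j (Finset.mem_univ j) fun k _ hk => by rw [ha k hk, zero_mul],
    hj, one_mul]

theorem integral_sum_mul_eq_of_integral_mul_eq_zero [MeasurableSpace Ω] {μ : Measure Ω}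
    (a : ι → ℝ) {ε : ι → Ω → ℝ} {j : ι} (hint : ∀ k, Integrable (fun ω => ε k ω * ε j ω) μ)
    (hcross : ∀ k, k ≠ j → ∫ ω, ε k ω * ε j ω ∂μ = 0) :
    ∫ ω, (∑ k, a k * ε k ω) * ε j ω ∂μ = a j * ∫ ω, ε j ω ^ 2 ∂μ := by
  simp_rw [Finset.sum_mul, mul_assoc]
  rw [integral_finsetSum _ fun k _ => (hint k).const_mul (a k)]
  simp_rw [integral_const_mul]
  rw [Finset.sum_eq_single_of_mem j (Finset.mem_univ j) fun k _ hk => by rw [hcross k hk, mul_zero]]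
  simp_rw [sq]

theorem sum_mul_sub_mul_eq_sum_erase [DecidableEq ι] (a : ι → ℝ) (ε : ι → Ω → ℝ) (j : ι) :
    (fun ω => ∑ k, a k * ε k ω - a j * ε j ω) = ∑ k ∈ Finset.univ.erase j, a k • ε k := by
  funext ω
  simp only [Finset.sum_apply, Pi.smul_apply, smul_eq_mul]
  rw [← Finset.sum_erase_add _ _ (Finset.mem_univ j), add_sub_cancel_right]

end LinearModel

theorem stmt_11_general {Ω : Type*} [MeasurableSpace Ω] (μ : Measure Ω)
    [IsProbabilityMeasure μ] (p : ℕ)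
    (ε : Fin p → Ω → ℝ) (hmeas : ∀ k, Measurable (ε k))
    (hL2 : ∀ k, MemLp (ε k) 2 μ)
    (A : Matrix (Fin p) (Fin p) ℝ)
    (X : Fin p → Ω → ℝ) (hX : ∀ i, X i = fun ω => ∑ k, A i k * ε k ω)
    (j : Fin p) (hAjj : A j j = 1) (hAj : ∀ k, k ≠ j → A j k = 0)
    (hvar : 0 < ∫ ω, ε j ω ^ 2 ∂μ)
    (hmi : ∀ k, k ≠ j →
      μ[ε k | MeasurableSpace.comap (ε j) (borel ℝ)] =ᵐ[μ] 0) :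
    ∀ i : Fin p, i ≠ j →
      (∫ ω, X i ω * X j ω ∂μ = A i j * ∫ ω, X j ω ^ 2 ∂μ) ∧
      μ[fun ω => X i ω -
          ((∫ ω', X i ω' * X j ω' ∂μ) / ∫ ω', X j ω' ^ 2 ∂μ) * X j ω
        | MeasurableSpace.comap (X j) (borel ℝ)] =ᵐ[μ] 0 := by
  intro i _
  have hXj : X j = ε j := funext fun ω => by rw [hX j]; exact sum_mul_eq_of_eq_single hAjj hAj
  have hm : MeasurableSpace.comap (ε j) (borel ℝ) ≤ ‹MeasurableSpace Ω› := by
    simpa only [← BorelSpace.measurable_eq] using (hmeas j).comap_le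
  have hεj : StronglyMeasurable[MeasurableSpace.comap (ε j) (borel ℝ)] (ε j) :=
    (comap_measurable _).stronglyMeasurable
  have hcov : ∫ ω, X i ω * X j ω ∂μ = A i j * ∫ ω, X j ω ^ 2 ∂μ := by
    rw [hXj, hX i]
    refine integral_sum_mul_eq_of_integral_mul_eq_zero _
      (fun k => (hL2 k).integrable_mul (hL2 j)) fun k hk => ?_
    exact integral_mul_eq_zero_of_condExp_eq_zero hm hεj ((hL2 j).integrable_mul (hL2 k))
      ((hL2 k).integrable one_le_two) (hmi k hk)
  refine ⟨hcov, ?_⟩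
  have hcoef : (∫ ω, X i ω * X j ω ∂μ) / ∫ ω, X j ω ^ 2 ∂μ = A i j := by
    rw [hcov, hXj, mul_div_assoc, div_self hvar.ne', mul_one]
  classical
  rw [hcoef, hX i, hXj, sum_mul_sub_mul_eq_sum_erase]
  exact condExp_finsetSum_smul_eq_zero _ (fun k _ => (hL2 k).integrable one_le_two)
    fun k hk => hmi k (Finset.ne_of_mem_erase hk)

/-- Residual source-detection lemma of LiMIAM: in the linear model `X = A·ε`, if `j` is
a source node (row `j` of `A` is the `j`-th standard basis vector), `E[ε_j²] > 0`, and
every other disturbance is mean independent of `ε_j` (i.e. `E[ε_k | σ(ε_j)] = 0` a.s.),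
then for every `i ≠ j` we have `E[X_i·X_j] = A_{ij}·E[X_j²]` and the population
least-squares residual `R_{i|j}` satisfies `E[R_{i|j} | σ(X_j)] = 0` a.s. -/
theorem stmt_11 {Ω : Type*} [MeasurableSpace Ω] (μ : Measure Ω)
    [IsProbabilityMeasure μ] (p : ℕ) (hp : 1 ≤ p)
    (ε : Fin p → Ω → ℝ) (hmeas : ∀ k, Measurable (ε k))
    (hL2 : ∀ k, MemLp (ε k) 2 μ)
    (hmean : ∀ k, ∫ ω, ε k ω ∂μ = 0)
    (A : Matrix (Fin p) (Fin p) ℝ)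
    (X : Fin p → Ω → ℝ) (hX : ∀ i, X i = fun ω => ∑ k, A i k * ε k ω)
    (j : Fin p) (hAjj : A j j = 1) (hAj : ∀ k, k ≠ j → A j k = 0)
    (hvar : 0 < ∫ ω, ε j ω ^ 2 ∂μ)
    (hmi : ∀ k, k ≠ j →
      μ[ε k | MeasurableSpace.comap (ε j) (borel ℝ)] =ᵐ[μ] 0) :
    ∀ i : Fin p, i ≠ j →
      (∫ ω, X i ω * X j ω ∂μ = A i j * ∫ ω, X j ω ^ 2 ∂μ) ∧
      μ[fun ω => X i ω -
          ((∫ ω', X i ω' * X j ω' ∂μ) / ∫ ω', X j ω' ^ 2 ∂μ) * X j ω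
        | MeasurableSpace.comap (X j) (borel ℝ)] =ᵐ[μ] 0 :=
  stmt_11_general μ p ε hmeas hL2 A X hX j hAjj hAj hvar hmi
end

section
/- Fix an integer d ≥ 3, and let T be an order-d symmetric tensor on ℝ² with T_{1,…,1} ≠ 0 and T_{2,…,2} ≠ 0. Then there exist a unique real number a and a unique order-d symmetric tensor D with D_{1,…,1,2} = 0 (d−1 ones and one 2) such that T = L_a•D, where L_a is the lower unitriangular matrix with rows (1, 0) and (a, 1); and there also exist a unique real number b and a unique order-d symmetric tensor D' with D'_{2,…,2,1} = 0 (d−1 twos and one 1) such that T = U_b•D', where U_b is the upper unitriangular matrix with rows (1, b) and (0, 1). -/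
open Matrix

/-- A tensor is symmetric if it is invariant under all permutations of its indices. -/
def IsSymTensor {p d : ℕ} (T : (Fin d → Fin p) → ℝ) : Prop :=
  ∀ (σ : Equiv.Perm (Fin d)) (i : Fin d → Fin p), T (i ∘ σ) = T i

/-- The action of a matrix on an order-`d` tensor:
`(A•T)_{i₁,…,i_d} = Σ_{j₁,…,j_d} A_{i₁j₁}⋯A_{i_dj_d}·T_{j₁,…,j_d}`. -/
noncomputable def tensorAct {p d : ℕ} (A : Matrix (Fin p) (Fin p) ℝ)
    (T : (Fin d → Fin p) → ℝ) : (Fin d → Fin p) → ℝ :=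
  fun i => ∑ j : Fin d → Fin p, (∏ t, A (i t) (j t)) * T j

/-!
Write `L_x = 1 + x E_{c'c}` (`transvection c' c x`) for `c ≠ c'`. Every row of `L_x` other than
row `c'` is a standard basis vector, so `(L_x • D)_{c…c} = D_{c…c}` and
`(L_x • D)_{c…cc'} = D_{c…cc'} + x D_{c…c}`. The constraint `D_{c…cc'} = 0` therefore forces
`x = T_{c…cc'} / T_{c…c}`, and then `D = L_{-x} • T`. Both orders are this argument, with
`(c, c') = (1, 2)` and `(2, 1)`.
-/

section TensorAct

variable {p d : ℕ}

theorem tensorAct_apply_of_row_eq_single (A : Matrix (Fin p) (Fin p) ℝ)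
    (T : (Fin d → Fin p) → ℝ) (i : Fin d → Fin p) (hA : ∀ t, A (i t) = Pi.single (i t) 1) :
    tensorAct A T i = T i := by
  rw [tensorAct, Finset.sum_eq_single i (fun j _ hj => ?_) (by simp)]
  · simp [hA]
  · obtain ⟨t, ht⟩ : ∃ t, j t ≠ i t := by
      by_contra! h
      exact hj (funext h)
    rw [Finset.prod_eq_zero (Finset.mem_univ t) (by simp [hA, ht]), zero_mul]

theorem tensorAct_one (T : (Fin d → Fin p) → ℝ) : tensorAct 1 T = T :=
  funext fun i => tensorAct_apply_of_row_eq_single 1 T i fun t => by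
    ext k
    simp [one_apply, Pi.single_apply, eq_comm]

theorem tensorAct_mul (A B : Matrix (Fin p) (Fin p) ℝ) (T : (Fin d → Fin p) → ℝ) :
    tensorAct (A * B) T = tensorAct A (tensorAct B T) := by
  funext i
  have expand : ∀ j : Fin d → Fin p, ∏ t, (A * B) (i t) (j t)
      = ∑ k : Fin d → Fin p, ∏ t, A (i t) (k t) * B (k t) (j t) := fun j => by
    simp only [mul_apply]
    rw [Finset.prod_univ_sum, Fintype.piFinset_univ]
  simp only [tensorAct, expand, Finset.sum_mul, Finset.mul_sum, Finset.prod_mul_distrib]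
  rw [Finset.sum_comm]
  exact Finset.sum_congr rfl fun k _ => Finset.sum_congr rfl fun j _ => by ring

theorem IsSymTensor.tensorAct {T : (Fin d → Fin p) → ℝ} (hT : IsSymTensor T)
    (A : Matrix (Fin p) (Fin p) ℝ) : IsSymTensor (tensorAct A T) := by
  intro σ i
  refine Fintype.sum_equiv (Equiv.arrowCongr σ (Equiv.refl (Fin p))) _ _ fun j => ?_
  have hj : Equiv.arrowCongr σ (Equiv.refl (Fin p)) j = j ∘ σ.symm := rfl
  rw [hj]
  congr 1
  · rw [← Equiv.prod_comp σ fun t => A (i t) ((j ∘ σ.symm) t)]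
    simp
  · rw [← hT σ (j ∘ σ.symm), Function.comp_assoc, Equiv.symm_comp_self, Function.comp_id]

theorem tensorAct_apply_update (A : Matrix (Fin p) (Fin p) ℝ) (T : (Fin d → Fin p) → ℝ)
    (i : Fin d → Fin p) (s : Fin d) (hA : ∀ t ≠ s, A (i t) = Pi.single (i t) 1) (m : Fin p) :
    tensorAct A T (Function.update i s m) = ∑ k, A m k * T (Function.update i s k) := by
  set f : (Fin d → Fin p) → ℝ := fun j => (∏ t, A (Function.update i s m t) (j t)) * T j
  have hf_update : ∀ k, f (Function.update i s k) = A m k * T (Function.update i s k) := by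
    intro k
    simp only [f]
    congr 1
    rw [Finset.prod_eq_single s (fun t _ hts => ?_) (by simp)]
    · simp
    · simp [Function.update_of_ne hts, hA t hts]
  have hf_zero : ∀ j, j ∉ Finset.univ.image (Function.update i s) → f j = 0 := by
    intro j hj
    obtain ⟨t, hts, ht⟩ : ∃ t ≠ s, j t ≠ i t := by
      by_contra! h
      refine hj (Finset.mem_image.2 ⟨j s, Finset.mem_univ _, funext fun t => ?_⟩)
      by_cases hts : t = s
      · subst hts; simp
      · simp [Function.update_of_ne hts, h t hts]
    refine mul_eq_zero_of_left (Finset.prod_eq_zero (Finset.mem_univ t) ?_) _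
    simp [Function.update_of_ne hts, hA t hts, ht]
  simp_rw [← hf_update]
  rw [← Finset.sum_image (Function.update_injective i s).injOn,
    Finset.sum_subset (Finset.subset_univ _) fun j _ hj => hf_zero j hj]
  rfl

end TensorAct

theorem Matrix.transvection_row_of_ne {n R : Type*} [DecidableEq n] [CommRing R] {i j a : n}
    (ha : a ≠ i) (x : R) : transvection i j x a = Pi.single a 1 := by
  ext b
  simp [transvection, one_apply, Pi.single_apply, single_apply_of_row_ne ha.symm, eq_comm]

theorem Matrix.transvection_one_zero_fin_two {R : Type*} [CommRing R] (x : R) :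
    transvection (1 : Fin 2) 0 x = !![1, 0; x, 1] := by
  ext i j
  fin_cases i <;> fin_cases j <;> simp [transvection]

theorem Matrix.transvection_zero_one_fin_two {R : Type*} [CommRing R] (x : R) :
    transvection (0 : Fin 2) 1 x = !![1, x; 0, 1] := by
  ext i j
  fin_cases i <;> fin_cases j <;> simp [transvection]

section Transvection

variable {p d : ℕ} {c c' : Fin p}

theorem tensorAct_transvection_apply_const (hcc' : c ≠ c') (x : ℝ) (T : (Fin d → Fin p) → ℝ) :
    tensorAct (transvection c' c x) T (fun _ => c) = T (fun _ => c) :=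
  tensorAct_apply_of_row_eq_single _ T _ fun _ => transvection_row_of_ne hcc' x

theorem tensorAct_transvection_apply_update (hcc' : c ≠ c') (s : Fin d) (x : ℝ)
    (T : (Fin d → Fin p) → ℝ) :
    tensorAct (transvection c' c x) T (Function.update (fun _ => c) s c')
      = T (Function.update (fun _ => c) s c') + x * T (fun _ => c) := by
  rw [tensorAct_apply_update _ T _ s (fun _ _ => transvection_row_of_ne hcc' x)]
  simp [transvection, one_apply, single_apply, Finset.sum_add_distrib, add_mul]

theorem tensorAct_transvection_neg_cancel (hcc' : c ≠ c') (x : ℝ) (T : (Fin d → Fin p) → ℝ) :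
    tensorAct (transvection c' c x) (tensorAct (transvection c' c (-x)) T) = T := by
  rw [← tensorAct_mul, transvection_mul_transvection_same _ _ hcc'.symm, add_neg_cancel,
    transvection_zero, tensorAct_one]

theorem existsUnique_eq_tensorAct_transvection (hcc' : c ≠ c') (s : Fin d)
    {T : (Fin d → Fin p) → ℝ} (hT : IsSymTensor T) (hTc : T (fun _ => c) ≠ 0) :
    ∃! aD : ℝ × ((Fin d → Fin p) → ℝ),
      IsSymTensor aD.2 ∧
      aD.2 (Function.update (fun _ => c) s c') = 0 ∧
      T = tensorAct (transvection c' c aD.1) aD.2 := by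
  set a := T (Function.update (fun _ => c) s c') / T (fun _ => c) with ha
  refine ⟨(a, tensorAct (transvection c' c (-a)) T),
    ⟨hT.tensorAct _, ?_, (tensorAct_transvection_neg_cancel hcc' a T).symm⟩, ?_⟩
  · show tensorAct _ T _ = 0
    rw [tensorAct_transvection_apply_update hcc', neg_mul, ← sub_eq_add_neg, ha,
      div_mul_cancel₀ _ hTc, sub_self]
  · rintro ⟨b, D⟩ ⟨-, hD, hTD⟩
    dsimp only at hD hTD
    have hTc_eq : T (fun _ => c) = D (fun _ => c) := by
      rw [hTD, tensorAct_transvection_apply_const hcc']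
    have hTs_eq : T (Function.update (fun _ => c) s c') = b * D (fun _ => c) := by
      rw [hTD, tensorAct_transvection_apply_update hcc', hD, zero_add]
    have hb : b = a := by
      rw [ha, hTs_eq, hTc_eq, mul_div_cancel_right₀ _ (hTc_eq ▸ hTc)]
    refine Prod.ext hb ?_
    rw [← hb, hTD]
    simpa using (tensorAct_transvection_neg_cancel hcc' (-b) D).symm

end Transvection

/-- Two-variable non-identifiability from a single higher-order tensor: a symmetric
order-`d` tensor on `ℝ²` with nonzero extreme diagonal entries admits a unique
lower-unitriangular decomposition `T = L_a•D` with `D_{1,…,1,2} = 0` (order `1 < 2`)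
and also a unique upper-unitriangular decomposition `T = U_b•D'` with `D'_{2,…,2,1} = 0`
(reversed order `2 < 1`). -/
theorem stmt_17 (d : ℕ) (hd : 3 ≤ d)
    (T : (Fin d → Fin 2) → ℝ) (hT : IsSymTensor T)
    (h1 : T (fun _ => 0) ≠ 0) (h2 : T (fun _ => 1) ≠ 0) :
    (∃! aD : ℝ × ((Fin d → Fin 2) → ℝ),
      IsSymTensor aD.2 ∧
      aD.2 (Function.update (fun _ => (0 : Fin 2)) ⟨d - 1, by omega⟩ 1) = 0 ∧
      T = tensorAct !![1, 0; aD.1, 1] aD.2) ∧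
    (∃! bD : ℝ × ((Fin d → Fin 2) → ℝ),
      IsSymTensor bD.2 ∧
      bD.2 (Function.update (fun _ => (1 : Fin 2)) ⟨d - 1, by omega⟩ 0) = 0 ∧
      T = tensorAct !![1, bD.1; 0, 1] bD.2) := by
  constructor
  · simpa only [transvection_one_zero_fin_two] using
      existsUnique_eq_tensorAct_transvection (c := 0) (c' := 1) zero_ne_one ⟨d - 1, by omega⟩ hT h1
  · simpa only [transvection_zero_one_fin_two] using
      existsUnique_eq_tensorAct_transvection (c := 1) (c' := 0) one_ne_zero ⟨d - 1, by omega⟩ hT h2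
end

section
/- Fix an integer d ≥ 3. Let ε₁, ε₂ be real random variables on a probability space with E[ε₁] = E[ε₂] = 0, E[|ε₁|^d] < ∞, E[|ε₂|^d] < ∞, E[ε₁·ε₂] = 0, and E[ε₁^{d−1}·ε₂] = 0, and let B ∈ ℝ. Define X₁ = ε₁ and X₂ = B·ε₁ + ε₂. Then the score S₁₂^{(d)} := E[X₁·X₂^{d−1}]·E[X₂²] − E[X₁·X₂]·E[X₂^d] satisfies S₁₂^{(d)} = −B·E[ε₁²]·E[ε₂^d] + Σ_{k=1, k≠d−1}^{d} [ C(d−1, k−1)·B^{k−1}·E[ε₂²] − C(d−1, k)·B^{k+1}·E[ε₁²] ]·E[ε₁^k·ε₂^{d−k}], where C(n, k) denotes the binomial coefficient (with C(n, k) = 0 for k > n). -/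
/-!
Expanding `X₂ = B ε₁ + ε₂` binomially turns each of the four moments in the score into a
combination of the mixed moments `E[ε₁^k ε₂^(d-k)]`, all finite since
`|x|^i |y|^j ≤ 1 + |x|^d + |y|^d` for `i + j ≤ d`. With `E[ε₁ε₂] = 0` the second-order
moments reduce to `E[X₁X₂] = B E[ε₁²]` and `E[X₂²] = E[ε₂²] + B² E[ε₁²]`, and Pascal's rule
`C(d, k) = C(d-1, k-1) + C(d-1, k)` collects the coefficient of each mixed moment; the
`k = d - 1` term vanishes by `E[ε₁^(d-1) ε₂] = 0`.
-/

open MeasureTheory Finset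

lemma pow_le_one_add_pow {z : ℝ} (hz : 0 ≤ z) {m d : ℕ} (hmd : m ≤ d) : z ^ m ≤ 1 + z ^ d := by
  rcases le_total z 1 with h | h
  · linarith [pow_le_one₀ hz h (n := m), pow_nonneg hz d]
  · linarith [pow_le_pow_right₀ h hmd]

lemma pow_mul_pow_le_one_add_pow_add_pow {x y : ℝ} (hx : 0 ≤ x) (hy : 0 ≤ y) {i j d : ℕ}
    (hij : i + j ≤ d) : x ^ i * y ^ j ≤ 1 + x ^ d + y ^ d := by
  rcases le_total x y with h | h
  · calc x ^ i * y ^ j ≤ y ^ i * y ^ j := by gcongr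
      _ = y ^ (i + j) := (pow_add y i j).symm
      _ ≤ 1 + y ^ d := pow_le_one_add_pow hy hij
      _ ≤ 1 + x ^ d + y ^ d := by linarith [pow_nonneg hx d]
  · calc x ^ i * y ^ j ≤ x ^ i * x ^ j := by gcongr
      _ = x ^ (i + j) := (pow_add x i j).symm
      _ ≤ 1 + x ^ d := pow_le_one_add_pow hx hij
      _ ≤ 1 + x ^ d + y ^ d := by linarith [pow_nonneg hy d]

section Moments

variable {Ω : Type*} [MeasurableSpace Ω] {μ : Measure Ω} {f g : Ω → ℝ}

lemma integrable_pow_mul_pow_of_add_le [IsFiniteMeasure μ] {d i j : ℕ}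
    (hf : AEStronglyMeasurable f μ) (hg : AEStronglyMeasurable g μ)
    (hfd : Integrable (fun ω => |f ω| ^ d) μ) (hgd : Integrable (fun ω => |g ω| ^ d) μ)
    (hij : i + j ≤ d) : Integrable (fun ω => f ω ^ i * g ω ^ j) μ := by
  refine (((integrable_const 1).add hfd).add hgd).mono' ((hf.pow i).mul (hg.pow j)) ?_
  refine Filter.Eventually.of_forall fun ω => ?_
  rw [Real.norm_eq_abs, abs_mul, abs_pow, abs_pow]
  exact pow_mul_pow_le_one_add_pow_add_pow (abs_nonneg _) (abs_nonneg _) hij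

lemma integral_mul_add_pow (w : Ω → ℝ) (B : ℝ) (n : ℕ)
    (hint : ∀ k ∈ range (n + 1), Integrable (fun ω => w ω * f ω ^ k * g ω ^ (n - k)) μ) :
    ∫ ω, w ω * (B * f ω + g ω) ^ n ∂μ =
      ∑ k ∈ range (n + 1), (n.choose k : ℝ) * B ^ k * ∫ ω, w ω * f ω ^ k * g ω ^ (n - k) ∂μ := by
  have hexpand : (fun ω => w ω * (B * f ω + g ω) ^ n) = fun ω =>
      ∑ k ∈ range (n + 1), (n.choose k : ℝ) * B ^ k * (w ω * f ω ^ k * g ω ^ (n - k)) := by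
    funext ω
    rw [add_pow, mul_sum]
    refine sum_congr rfl fun k _ => ?_
    ring
  rw [hexpand, integral_finsetSum _ fun k hk => (hint k hk).const_mul _]
  exact sum_congr rfl fun k _ => integral_const_mul _ _

end Moments

lemma score_polynomial_identity (n : ℕ) (B a c : ℝ) (m : ℕ → ℝ) :
    (∑ k ∈ range (n + 1), (n.choose k : ℝ) * B ^ k * m (k + 1)) * (c + B ^ 2 * a) -
        B * a * ∑ k ∈ range (n + 2), ((n + 1).choose k : ℝ) * B ^ k * m k =
      -B * a * m 0 + ∑ k ∈ Icc 1 (n + 1),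
        ((n.choose (k - 1) : ℝ) * B ^ (k - 1) * c - (n.choose k : ℝ) * B ^ (k + 1) * a) * m k := by
  have hterm : ∀ k ∈ range (n + 1),
      ((n.choose k : ℝ) * B ^ k * c - (n.choose (k + 1) : ℝ) * B ^ (k + 2) * a) * m (k + 1) =
        (n.choose k : ℝ) * B ^ k * m (k + 1) * (c + B ^ 2 * a) -
          B * a * (((n + 1).choose (k + 1) : ℝ) * B ^ (k + 1) * m (k + 1)) := by
    intro k _
    rw [Nat.choose_succ_succ']
    push_cast
    ring
  rw [← Ico_add_one_right_eq_Icc, sum_Ico_eq_sum_range,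
    sum_range_succ' (fun k => ((n + 1).choose k : ℝ) * B ^ k * m k)]
  simp only [add_tsub_cancel_right, add_comm 1]
  rw [sum_congr rfl hterm, sum_sub_distrib, ← sum_mul, ← mul_sum]
  simp only [Nat.choose_zero_right, Nat.cast_one, pow_zero, one_mul]
  ring

theorem stmt_18_general {Ω : Type*} [MeasurableSpace Ω] (μ : Measure Ω)
    [IsProbabilityMeasure μ] (d : ℕ) (hd : 3 ≤ d)
    (ε₁ ε₂ : Ω → ℝ) (h1meas : Measurable ε₁) (h2meas : Measurable ε₂)
    (hd1 : Integrable (fun ω => |ε₁ ω| ^ d) μ)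
    (hd2 : Integrable (fun ω => |ε₂ ω| ^ d) μ)
    (hcov : ∫ ω, ε₁ ω * ε₂ ω ∂μ = 0)
    (hmom : ∫ ω, ε₁ ω ^ (d - 1) * ε₂ ω ∂μ = 0)
    (B : ℝ) :
    (∫ ω, ε₁ ω * (B * ε₁ ω + ε₂ ω) ^ (d - 1) ∂μ) *
        (∫ ω, (B * ε₁ ω + ε₂ ω) ^ 2 ∂μ) -
      (∫ ω, ε₁ ω * (B * ε₁ ω + ε₂ ω) ∂μ) *
        (∫ ω, (B * ε₁ ω + ε₂ ω) ^ d ∂μ) =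
    -B * (∫ ω, ε₁ ω ^ 2 ∂μ) * (∫ ω, ε₂ ω ^ d ∂μ) +
      ∑ k ∈ (Finset.Icc 1 d).erase (d - 1),
        (((d - 1).choose (k - 1) : ℝ) * B ^ (k - 1) * (∫ ω, ε₂ ω ^ 2 ∂μ) -
          ((d - 1).choose k : ℝ) * B ^ (k + 1) * (∫ ω, ε₁ ω ^ 2 ∂μ)) *
        ∫ ω, ε₁ ω ^ k * ε₂ ω ^ (d - k) ∂μ := by
  obtain ⟨n, rfl⟩ : ∃ n, d = n + 1 := ⟨d - 1, by omega⟩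
  simp only [add_tsub_cancel_right] at hmom ⊢
  have hmoment (i j : ℕ) (hij : i + j ≤ n + 1) : Integrable (fun ω => ε₁ ω ^ i * ε₂ ω ^ j) μ :=
    integrable_pow_mul_pow_of_add_le h1meas.aestronglyMeasurable h2meas.aestronglyMeasurable
      hd1 hd2 hij
  have hsq : ∫ ω, (B * ε₁ ω + ε₂ ω) ^ 2 ∂μ = (∫ ω, ε₂ ω ^ 2 ∂μ) + B ^ 2 * ∫ ω, ε₁ ω ^ 2 ∂μ := by
    simpa [sum_range_succ, hcov] using
      integral_mul_add_pow (μ := μ) (f := ε₁) (g := ε₂) (fun _ => 1) B 2 fun k hk => by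
        simpa only [one_mul] using hmoment k (2 - k) (by simp at hk; omega)
  have hlin : ∫ ω, ε₁ ω * (B * ε₁ ω + ε₂ ω) ∂μ = B * ∫ ω, ε₁ ω ^ 2 ∂μ := by
    simpa [sum_range_succ, hcov, pow_two] using
      integral_mul_add_pow (μ := μ) (f := ε₁) (g := ε₂) ε₁ B 1 fun k hk => by
        simpa only [pow_succ', mul_assoc] using hmoment (k + 1) (1 - k) (by simp at hk; omega)
  have hX1 : ∫ ω, ε₁ ω * (B * ε₁ ω + ε₂ ω) ^ n ∂μ = ∑ k ∈ range (n + 1),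
      (n.choose k : ℝ) * B ^ k * ∫ ω, ε₁ ω ^ (k + 1) * ε₂ ω ^ (n + 1 - (k + 1)) ∂μ := by
    rw [integral_mul_add_pow ε₁ B n fun k hk => by
      simpa only [pow_succ', mul_assoc] using hmoment (k + 1) (n - k) (by simp at hk; omega)]
    simp only [Nat.add_sub_add_right, pow_succ', mul_assoc]
  have hX2 : ∫ ω, (B * ε₁ ω + ε₂ ω) ^ (n + 1) ∂μ = ∑ k ∈ range (n + 2),
      ((n + 1).choose k : ℝ) * B ^ k * ∫ ω, ε₁ ω ^ k * ε₂ ω ^ (n + 1 - k) ∂μ := by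
    simpa only [one_mul] using integral_mul_add_pow (μ := μ) (fun _ => 1) B (n + 1) fun k hk => by
      simpa only [one_mul] using hmoment k (n + 1 - k) (by simp at hk; omega)
  rw [hX1, hsq, hlin, hX2, sum_erase _ (by simp [hmom])]
  simpa only [pow_zero, one_mul, Nat.sub_zero, neg_mul] using
    score_polynomial_identity n B _ _ fun k => ∫ ω, ε₁ ω ^ k * ε₂ ω ^ (n + 1 - k) ∂μ

/-- Explicit genericity polynomial of the two-variable finite-order LiMIAM model: for
`X₁ = ε₁` and `X₂ = B·ε₁ + ε₂`, under `E[ε₁] = E[ε₂] = 0`, `E[ε₁ε₂] = 0` and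
`E[ε₁^{d−1}ε₂] = 0`, the score `S₁₂^{(d)}` expands as
`−B·E[ε₁²]·E[ε₂^d] + Σ_{k=1, k≠d−1}^{d} [C(d−1,k−1)·B^{k−1}·E[ε₂²] −
C(d−1,k)·B^{k+1}·E[ε₁²]]·E[ε₁^k·ε₂^{d−k}]`. -/
theorem stmt_18 {Ω : Type*} [MeasurableSpace Ω] (μ : Measure Ω)
    [IsProbabilityMeasure μ] (d : ℕ) (hd : 3 ≤ d)
    (ε₁ ε₂ : Ω → ℝ) (h1meas : Measurable ε₁) (h2meas : Measurable ε₂)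
    (hm1 : ∫ ω, ε₁ ω ∂μ = 0) (hm2 : ∫ ω, ε₂ ω ∂μ = 0)
    (hd1 : Integrable (fun ω => |ε₁ ω| ^ d) μ)
    (hd2 : Integrable (fun ω => |ε₂ ω| ^ d) μ)
    (hcov : ∫ ω, ε₁ ω * ε₂ ω ∂μ = 0)
    (hmom : ∫ ω, ε₁ ω ^ (d - 1) * ε₂ ω ∂μ = 0)
    (B : ℝ) :
    (∫ ω, ε₁ ω * (B * ε₁ ω + ε₂ ω) ^ (d - 1) ∂μ) *
        (∫ ω, (B * ε₁ ω + ε₂ ω) ^ 2 ∂μ) -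
      (∫ ω, ε₁ ω * (B * ε₁ ω + ε₂ ω) ∂μ) *
        (∫ ω, (B * ε₁ ω + ε₂ ω) ^ d ∂μ) =
    -B * (∫ ω, ε₁ ω ^ 2 ∂μ) * (∫ ω, ε₂ ω ^ d ∂μ) +
      ∑ k ∈ (Finset.Icc 1 d).erase (d - 1),
        (((d - 1).choose (k - 1) : ℝ) * B ^ (k - 1) * (∫ ω, ε₂ ω ^ 2 ∂μ) -
          ((d - 1).choose k : ℝ) * B ^ (k + 1) * (∫ ω, ε₁ ω ^ 2 ∂μ)) *
        ∫ ω, ε₁ ω ^ k * ε₂ ω ^ (d - k) ∂μ :=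
  stmt_18_general μ d hd ε₁ ε₂ h1meas h2meas hd1 hd2 hcov hmom B
end
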